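/- arXiv:2603.25161 — 2 statements merged into one kernel-verified Lean document; each statement's English description precedes it below -/
import Mathlib

section
/- Let L be the Laplacian matrix of a connected weighted undirected graph on N vertices and Q ∈ ℝ^{n×n} symmetric positive definite. If a sequence x : ℕ → ℝ^{Nn} satisfies ∑_{k=0}^∞ x[k]ᵀ (L ⊗ Q) x[k] < ∞, then for every pair of agents i, j, the disagreement x_i[k] − x_j[k] tends to 0 as k → ∞, where x_i[k] ∈ ℝⁿ denotes the i-th block of x[k]. -/
open Matrix Kronecker Filter Topology

/-!
Since `Q` is invertible, `(L ⊗ Q) v = 0` forces every coordinate slice `b ↦ v (b, l)` into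
`ker L`, i.e. to be constant; so the disagreement functional `v ↦ v (i, l) - v (j, l)`
vanishes on the kernel of the positive semidefinite matrix `A = L ⊗ Q`. Any functional vanishing
on `ker A` has the form `v ↦ uᵀ A v`, and Cauchy–Schwarz for the form of `A` bounds its square by
`(uᵀ A u) · vᵀ A v`. Along the sequence the right-hand side tends to zero, being the general term
of a convergent series.
-/

namespace Matrix

variable {m n p : Type*} [Fintype m]

theorem mulVec_eq_zero_of_kronecker_mulVec_eq_zero {R : Type*} [CommRing R] [Fintype n]
    [DecidableEq n] {L : Matrix p m R} {Q : Matrix n n R} (hQ : IsUnit Q) {v : m × n → R}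
    (hv : (L ⊗ₖ Q) *ᵥ v = 0) (l : n) : L *ᵥ (fun b => v (b, l)) = 0 := by
  have hvec : v = vec (of fun l b => v (b, l)) := rfl
  have := hQ.invertible
  rw [hvec, kronecker_mulVec_vec, vec_eq_zero_iff, Matrix.mul_assoc, ← Matrix.mul_zero Q,
    mul_right_inj_of_invertible] at hv
  funext a
  simpa [mul_apply, mulVec, dotProduct, mul_comm] using congrFun (congrFun hv l) a

variable [DecidableEq m]

theorem exists_dotProduct_mulVec_eq_of_forall_mulVec_eq_zero {K : Type*} [Field K] [Fintype p]
    [DecidableEq p] {A : Matrix p m K} {w : m → K} (hw : ∀ v, A *ᵥ v = 0 → w ⬝ᵥ v = 0) :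
    ∃ u : p → K, ∀ v, w ⬝ᵥ v = u ⬝ᵥ A *ᵥ v := by
  have hmem : dotProductEquiv K m w ∈ LinearMap.range A.mulVecLin.dualMap := by
    rw [LinearMap.range_dualMap_eq_dualAnnihilator_ker, Submodule.mem_dualAnnihilator]
    exact hw
  obtain ⟨φ, hφ⟩ := hmem
  obtain ⟨u, rfl⟩ := (dotProductEquiv K p).surjective φ
  exact ⟨u, fun v => (LinearMap.congr_fun hφ v).symm⟩

theorem PosSemidef.sq_dotProduct_mulVec_le {A : Matrix m m ℝ} (hA : A.PosSemidef) (u v : m → ℝ) :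
    (u ⬝ᵥ A *ᵥ v) ^ 2 ≤ (u ⬝ᵥ A *ᵥ u) * (v ⬝ᵥ A *ᵥ v) := by
  have hsymm : (toLinearMap₂' ℝ A).IsSymm := ⟨fun u v => by
    simp only [toLinearMap₂'_apply', RingHom.id_apply, dotProduct_mulVec u, ← mulVec_transpose]
    rw [← conjTranspose_eq_transpose_of_trivial, hA.isHermitian.eq, dotProduct_comm]⟩
  have hnonneg (v : m → ℝ) : 0 ≤ toLinearMap₂' ℝ A v v := by
    simpa only [toLinearMap₂'_apply', star_trivial] using hA.dotProduct_mulVec_nonneg v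
  simpa only [toLinearMap₂'_apply'] using
    LinearMap.BilinForm.apply_sq_le_of_symm (toLinearMap₂' ℝ A) hnonneg hsymm u v

theorem PosSemidef.exists_sq_dotProduct_le {A : Matrix m m ℝ} (hA : A.PosSemidef) {w : m → ℝ}
    (hw : ∀ v, A *ᵥ v = 0 → w ⬝ᵥ v = 0) :
    ∃ c, ∀ v, (w ⬝ᵥ v) ^ 2 ≤ c * (v ⬝ᵥ A *ᵥ v) := by
  obtain ⟨u, hu⟩ := exists_dotProduct_mulVec_eq_of_forall_mulVec_eq_zero hw
  exact ⟨u ⬝ᵥ A *ᵥ u, fun v => hu v ▸ hA.sq_dotProduct_mulVec_le u v⟩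

theorem PosSemidef.tendsto_dotProduct_zero {ι : Type*} {l : Filter ι} {A : Matrix m m ℝ}
    (hA : A.PosSemidef) {w : m → ℝ} (hw : ∀ v, A *ᵥ v = 0 → w ⬝ᵥ v = 0) {x : ι → m → ℝ}
    (hx : Tendsto (fun k => x k ⬝ᵥ A *ᵥ x k) l (𝓝 0)) :
    Tendsto (fun k => w ⬝ᵥ x k) l (𝓝 0) := by
  obtain ⟨c, hc⟩ := hA.exists_sq_dotProduct_le hw
  have hsq : Tendsto (fun k => (w ⬝ᵥ x k) ^ 2) l (𝓝 0) :=
    squeeze_zero (fun k => sq_nonneg _) (fun k => hc (x k)) (by simpa using hx.const_mul c)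
  refine (tendsto_zero_iff_abs_tendsto_zero _).mpr ?_
  simpa [Function.comp_def, Real.sqrt_sq_eq_abs] using hsq.sqrt

end Matrix

theorem stmt_8 {N n : ℕ}
    (L : Matrix (Fin N) (Fin N) ℝ) (hL : L.PosSemidef)
    (hker : ∀ v : Fin N → ℝ, L *ᵥ v = 0 → ∃ c : ℝ, v = fun _ => c)
    (Q : Matrix (Fin n) (Fin n) ℝ) (hQ : Q.PosDef)
    (x : ℕ → (Fin N × Fin n) → ℝ)
    (hsum : Summable (fun k => x k ⬝ᵥ (L ⊗ₖ Q) *ᵥ x k)) :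
    ∀ i j : Fin N,
      Tendsto (fun k => (fun l : Fin n => x k (i, l) - x k (j, l))) atTop (nhds 0) := by
  intro i j
  rw [tendsto_pi_nhds]
  intro l
  have hw : ∀ v, (L ⊗ₖ Q) *ᵥ v = 0 → (Pi.single (i, l) 1 - Pi.single (j, l) 1) ⬝ᵥ v = 0 := by
    intro v hv
    obtain ⟨c, hc⟩ := hker _ (mulVec_eq_zero_of_kronecker_mulVec_eq_zero hQ.isUnit hv l)
    simp [sub_dotProduct, congrFun hc i, congrFun hc j]
  simpa [sub_dotProduct] using
    (hL.kronecker hQ.posSemidef).tendsto_dotProduct_zero hw hsum.tendsto_atTop_zero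
end

section
/- Let e : ℕ → ℝⁿ and g : ℕ → ℝ satisfy: (i) e 0 = 0, (ii) there exist constants σ > 0, α ≥ 0 with σ(1+η⁻¹)α < 1 for some η > 0, such that for all k ≥ 1, ‖e k‖² ≤ σ(1+η)·g(k−1) + σ(1+η⁻¹)α·‖e(k−1)‖², with g(k) ≥ 0 for all k. Then ∑_{k=0}^{∞} ‖e k‖² ≤ [σ(1+η)/(1 − σ(1+η⁻¹)α)] · ∑_{k=0}^{∞} g(k), where both sides may be infinite. -/
/-!
Summing the recursion `x (k + 1) ≤ a * g k + b * x k` with `x 0 = 0` bounds each partial sum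
`S_N` of `x` by `a * G_N + b * S_N`, where `G_N` is the partial sum of `g`; since `b < 1`
this gives `S_N ≤ a / (1 - b) * G_N`. Taking the supremum over `N` in `ℝ≥0∞` yields the claim
with no summability assumption on either side.
-/

open Finset

theorem sum_range_le_mul_sum_range_add_mul_sum_range {x g : ℕ → ℝ} {a b : ℝ}
    (hx : ∀ k, 0 ≤ x k) (hg : ∀ k, 0 ≤ g k) (ha : 0 ≤ a) (hb : 0 ≤ b) (hx0 : x 0 = 0)
    (hrec : ∀ k, x (k + 1) ≤ a * g k + b * x k) :
    ∀ N, ∑ i ∈ range N, x i ≤ a * ∑ i ∈ range N, g i + b * ∑ i ∈ range N, x i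
  | 0 => by simp
  | N + 1 => calc
      ∑ i ∈ range (N + 1), x i = ∑ i ∈ range N, x (i + 1) := by
        rw [sum_range_succ', hx0, add_zero]
      _ ≤ ∑ i ∈ range N, (a * g i + b * x i) := sum_le_sum fun i _ => hrec i
      _ = a * ∑ i ∈ range N, g i + b * ∑ i ∈ range N, x i := by
        rw [sum_add_distrib, mul_sum, mul_sum]
      _ ≤ a * ∑ i ∈ range (N + 1), g i + b * ∑ i ∈ range (N + 1), x i := by
        rw [sum_range_succ g, sum_range_succ x]
        gcongr <;> simp [hg, hx]

theorem sum_range_le_div_mul_sum_range {x g : ℕ → ℝ} {a b : ℝ}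
    (hx : ∀ k, 0 ≤ x k) (hg : ∀ k, 0 ≤ g k) (ha : 0 ≤ a) (hb₀ : 0 ≤ b) (hb₁ : b < 1)
    (hx0 : x 0 = 0) (hrec : ∀ k, x (k + 1) ≤ a * g k + b * x k) (N : ℕ) :
    ∑ i ∈ range N, x i ≤ a / (1 - b) * ∑ i ∈ range N, g i := by
  have hself := sum_range_le_mul_sum_range_add_mul_sum_range hx hg ha hb₀ hx0 hrec N
  rw [div_mul_eq_mul_div, le_div_iff₀ (sub_pos.mpr hb₁)]
  linarith

theorem ENNReal.tsum_ofReal_le_ofReal_mul_tsum_ofReal {x y : ℕ → ℝ} {c : ℝ}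
    (hx : ∀ k, 0 ≤ x k) (hy : ∀ k, 0 ≤ y k) (hc : 0 ≤ c)
    (hsum : ∀ N, ∑ i ∈ range N, x i ≤ c * ∑ i ∈ range N, y i) :
    ∑' k, ENNReal.ofReal (x k) ≤ ENNReal.ofReal c * ∑' k, ENNReal.ofReal (y k) := by
  rw [ENNReal.tsum_eq_iSup_nat]
  refine iSup_le fun N => ?_
  calc ∑ i ∈ range N, ENNReal.ofReal (x i)
      = ENNReal.ofReal (∑ i ∈ range N, x i) :=
        (ENNReal.ofReal_sum_of_nonneg fun i _ => hx i).symm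
    _ ≤ ENNReal.ofReal (c * ∑ i ∈ range N, y i) := ENNReal.ofReal_le_ofReal (hsum N)
    _ = ENNReal.ofReal c * ∑ i ∈ range N, ENNReal.ofReal (y i) := by
      rw [ENNReal.ofReal_mul hc, ENNReal.ofReal_sum_of_nonneg fun i _ => hy i]
    _ ≤ ENNReal.ofReal c * ∑' k, ENNReal.ofReal (y k) := by
      gcongr
      exact ENNReal.sum_le_tsum _

theorem stmt_11 {n : ℕ} (e : ℕ → EuclideanSpace ℝ (Fin n)) (g : ℕ → ℝ)
    (he0 : e 0 = 0) (hg : ∀ k, 0 ≤ g k)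
    (σ α η : ℝ) (hσ : 0 < σ) (hα : 0 ≤ α) (hη : 0 < η)
    (hcontr : σ * (1 + η⁻¹) * α < 1)
    (hrec : ∀ k, 1 ≤ k →
      ‖e k‖ ^ 2 ≤ σ * (1 + η) * g (k - 1) + σ * (1 + η⁻¹) * α * ‖e (k - 1)‖ ^ 2) :
    (∑' k, ENNReal.ofReal (‖e k‖ ^ 2)) ≤
      ENNReal.ofReal (σ * (1 + η) / (1 - σ * (1 + η⁻¹) * α)) *
        ∑' k, ENNReal.ofReal (g k) := by
  have ha : 0 ≤ σ * (1 + η) := by positivity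
  have hb : 0 ≤ σ * (1 + η⁻¹) * α := by positivity
  have hsq : ∀ k, 0 ≤ ‖e k‖ ^ 2 := fun k => sq_nonneg _
  refine ENNReal.tsum_ofReal_le_ofReal_mul_tsum_ofReal hsq hg
    (div_nonneg ha (sub_pos.mpr hcontr).le) fun N => ?_
  refine sum_range_le_div_mul_sum_range hsq hg ha hb hcontr (by simp [he0]) (fun k => ?_) N
  simpa using hrec (k + 1) (Nat.le_add_left 1 k)
end
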